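/- arXiv:2502.21144 — 8 statements merged into one kernel-verified Lean document; each statement's English description precedes it below -/
import Mathlib

section
/- Conversely, every valuation φ on compact intervals of ℝ has the form φ([a,b]) = g(b) − f(a) for a unique pair of functions f, g : ℝ → ℝ with f(0) = 0; explicitly one may take f(x) = φ([0,x]) − φ({x}) for x ≥ 0, f(x) = φ({0}) − φ([x,0]) for x < 0, g(x) = φ([0,x]) for x ≥ 0, and g(x) = φ({x}) + φ({0}) − φ([x,0]) for x < 0. -/
/-- Every valuation on compact intervals of ℝ has the form `[a,b] ↦ g b − f a` for a unique
pair `(f, g)` with `f 0 = 0`; explicitly one may take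
`f x = φ [0,x] − φ {x}` for `x ≥ 0`, `f x = φ {0} − φ [x,0]` for `x < 0`,
`g x = φ [0,x]` for `x ≥ 0`, and `g x = φ {x} + φ {0} − φ [x,0]` for `x < 0`. -/
theorem line_valuation_representation (φ : Set ℝ → ℝ)
    (hempty : φ ∅ = 0)
    (hadd : ∀ a b c d : ℝ, a ≤ b → c ≤ d →
      Set.Icc a b ∪ Set.Icc c d = Set.Icc (min a c) (max b d) →
      φ (Set.Icc a b ∪ Set.Icc c d) + φ (Set.Icc a b ∩ Set.Icc c d)
        = φ (Set.Icc a b) + φ (Set.Icc c d)) :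
    (∃! fg : (ℝ → ℝ) × (ℝ → ℝ), fg.1 0 = 0 ∧
      ∀ a b : ℝ, a ≤ b → φ (Set.Icc a b) = fg.2 b - fg.1 a) ∧
    (∀ a b : ℝ, a ≤ b →
      φ (Set.Icc a b)
        = (if 0 ≤ b then φ (Set.Icc 0 b) else φ {b} + φ {0} - φ (Set.Icc b 0))
          - (if 0 ≤ a then φ (Set.Icc 0 a) - φ {a} else φ {0} - φ (Set.Icc a 0))) := by
  set F : ℝ → ℝ := fun x => if 0 ≤ x then φ (Set.Icc 0 x) - φ {x} else φ {0} - φ (Set.Icc x 0)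
    with hF
  set G : ℝ → ℝ := fun x => if 0 ≤ x then φ (Set.Icc 0 x)
    else φ {x} + φ {0} - φ (Set.Icc x 0) with hG
  have key : ∀ a b : ℝ, a ≤ b → φ (Set.Icc a b) = G b - F a := by
    intro a b hab
    rcases le_or_gt 0 a with ha | ha
    · have hb : (0:ℝ) ≤ b := le_trans ha hab
      have h := hadd 0 a a b ha hab (by
        rw [Set.Icc_union_Icc_eq_Icc ha hab, min_eq_left ha, max_eq_right hab])
      rw [Set.Icc_union_Icc_eq_Icc ha hab, Set.Icc_inter_Icc, max_eq_right ha,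
        min_eq_left hab, Set.Icc_self] at h
      simp only [hF, hG, if_pos ha, if_pos hb]
      linarith
    · rcases le_or_gt 0 b with hb | hb
      · have h := hadd a 0 0 b ha.le hb (by
          rw [Set.Icc_union_Icc_eq_Icc ha.le hb, min_eq_left ha.le, max_eq_right hb])
        rw [Set.Icc_union_Icc_eq_Icc ha.le hb, Set.Icc_inter_Icc, max_eq_right ha.le,
          min_eq_left hb, Set.Icc_self] at h
        simp only [hF, hG, if_neg (not_le.mpr ha), if_pos hb]
        linarith
      · have h := hadd a b b 0 hab hb.le (by
          rw [Set.Icc_union_Icc_eq_Icc hab hb.le, min_eq_left hab, max_eq_right hb.le])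
        rw [Set.Icc_union_Icc_eq_Icc hab hb.le, Set.Icc_inter_Icc, max_eq_right hab,
          min_eq_left hb.le, Set.Icc_self] at h
        simp only [hF, hG, if_neg (not_le.mpr ha), if_neg (not_le.mpr hb)]
        linarith
  have hF0 : F 0 = 0 := by
    simp [hF, Set.Icc_self]
  constructor
  · refine ⟨(F, G), ⟨hF0, fun a b hab => key a b hab⟩, ?_⟩
    rintro ⟨f, g⟩ ⟨hf0, hfg⟩
    simp only at hf0 hfg
    have hIcc : ∀ x : ℝ, Set.Icc x x = ({x} : Set ℝ) := fun x => Set.Icc_self x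
    have hg0 : g 0 = φ {0} := by
      have := hfg 0 0 le_rfl
      rw [hIcc] at this
      simp only [hf0, sub_zero] at this
      exact this.symm
    have hfeq : f = F := by
      funext x
      rcases le_or_gt 0 x with hx | hx
      · have h1 := hfg 0 x hx
        have h2 := hfg x x le_rfl
        rw [hIcc] at h2
        simp only [hf0, sub_zero] at h1
        simp only [hF, if_pos hx]
        linarith
      · have h1 := hfg x 0 hx.le
        simp only [hF, if_neg (not_le.mpr hx)]
        linarith
    have hgeq : g = G := by
      funext x
      rcases le_or_gt 0 x with hx | hx
      · have h1 := hfg 0 x hx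
        simp only [hf0, sub_zero] at h1
        simp only [hG, if_pos hx]
        linarith
      · have h1 := hfg x 0 hx.le
        have h2 := hfg x x le_rfl
        rw [hIcc] at h2
        simp only [hG, if_neg (not_le.mpr hx)]
        linarith
    exact Prod.ext hfeq hgeq
  · intro a b hab
    have := key a b hab
    simpa [hF, hG] using this
end

section
/- Let φ be an integer-valued valuation on compact convex subsets of ℝ^d that is σ-continuous at singletons, i.e., φ(K_n) → φ({x}) whenever compact convex K_n decrease to {x}. Then φ is σ-continuous at every compact convex K: φ(K_n) → φ(K) whenever K_n decrease to K. -/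
/-!
If `φ (K n) ↛ φ L` for some `K n ↓ L`, then `φ (K n) ≠ φ L` along a subsequence. Cutting by two
closed convex sets `C₁ ∪ C₂ = E`, additivity gives
`φ A + φ (A ∩ C₁ ∩ C₂) = φ (A ∩ C₁) + φ (A ∩ C₂)` both for `A = K n` and for `A = L`, so the
failure persists for one of the three pieces `K n ∩ C`. Cutting successively by the half-spaces
`{ℓ ≤ q}`, `{ℓ ≥ q}` for rational `q` and countably many separating functionals `ℓ`, the limits
shrink to a point `x`. Along the diagonal sequence, `φ` then stays away from its values at the
limits, which by σ-continuity at `{x}` and integrality both eventually equal `φ {x}`.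
-/

open Filter Set Topology

variable {E : Type*} [TopologicalSpace E] [AddCommGroup E] [Module ℝ E]

def IsConvexValuation (φ : Set E → ℝ) : Prop :=
  ∀ K L : Set E, IsCompact K → Convex ℝ K → IsCompact L → Convex ℝ L → Convex ℝ (K ∪ L) →
    φ (K ∪ L) + φ (K ∩ L) = φ K + φ L

def SigmaContinuousAt (φ : Set E → ℝ) (L : Set E) : Prop :=
  ∀ K : ℕ → Set E, (∀ n, IsCompact (K n)) → (∀ n, Convex ℝ (K n)) →
    (∀ n, K (n + 1) ⊆ K n) → ⋂ n, K n = L → Tendsto (fun n => φ (K n)) atTop (𝓝 (φ L))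

structure ClosedConvexCover (E : Type*) [TopologicalSpace E] [AddCommGroup E] [Module ℝ E] :
    Type _ where
  left : Set E
  right : Set E
  isClosed_left : IsClosed left
  isClosed_right : IsClosed right
  convex_left : Convex ℝ left
  convex_right : Convex ℝ right
  union_eq : left ∪ right = univ

namespace ClosedConvexCover

def halfSpaces (f : E →L[ℝ] ℝ) (c : ℝ) : ClosedConvexCover E where
  left := {y | f y ≤ c}
  right := {y | c ≤ f y}
  isClosed_left := isClosed_le f.continuous continuous_const
  isClosed_right := isClosed_le continuous_const f.continuous
  convex_left := convex_halfSpace_le (f : E →ₗ[ℝ] ℝ).isLinear c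
  convex_right := convex_halfSpace_ge (f : E →ₗ[ℝ] ℝ).isLinear c
  union_eq := eq_univ_of_forall fun y => le_total (f y) c

end ClosedConvexCover

theorem IsConvexValuation.add_inter_eq {φ : Set E → ℝ} (hφ : IsConvexValuation φ)
    (C : ClosedConvexCover E) {A : Set E} (hA : IsCompact A) (hAc : Convex ℝ A) :
    φ A + φ (A ∩ (C.left ∩ C.right)) = φ (A ∩ C.left) + φ (A ∩ C.right) := by
  have := hφ (A ∩ C.left) (A ∩ C.right) (hA.inter_right C.isClosed_left)
    (hAc.inter C.convex_left) (hA.inter_right C.isClosed_right) (hAc.inter C.convex_right)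
    (by rwa [← inter_union_distrib_left, C.union_eq, inter_univ])
  rwa [← inter_union_distrib_left, C.union_eq, inter_univ, ← inter_inter_distrib_left]
    at this

theorem eventually_eq_of_tendsto_of_forall_int {α : Type*} {l : Filter α} {u : α → ℝ} {a : ℝ}
    (hu : ∀ x, ∃ m : ℤ, u x = m) (ha : ∃ m : ℤ, a = m) (h : Tendsto u l (𝓝 a)) :
    ∀ᶠ x in l, u x = a := by
  obtain ⟨m, rfl⟩ := ha
  filter_upwards [Metric.tendsto_nhds.1 h 1 one_pos] with x hx
  obtain ⟨k, hk⟩ := hu x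
  rw [hk, Real.dist_eq, ← Int.cast_sub, ← Int.cast_abs, ← Int.cast_one, Int.cast_lt,
    Int.abs_lt_one_iff, sub_eq_zero] at hx
  rw [hk, hx]

theorem subsingleton_of_forall_rat_le_or_ge {ι : Type*} {X : Type*} (f : ι → X → ℝ)
    (hf : ∀ x y, (∀ i, f i x = f i y) → x = y) {S : Set X}
    (hS : ∀ (i : ι) (q : ℚ), S ⊆ {y | f i y ≤ q} ∨ S ⊆ {y | q ≤ f i y}) : S.Subsingleton := by
  intro x hx y hy
  refine hf x y fun i => by_contra fun hne => ?_
  obtain ⟨q, hq_min, hq_max⟩ := exists_rat_btwn (min_lt_max.2 hne)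
  rcases hS i q with h | h
  · exact (max_le (h hx) (h hy)).not_gt hq_max
  · exact (le_min (h hx) (h hy)).not_gt hq_min

structure BadSequence (φ : Set E → ℝ) where
  seq : ℕ → Set E
  lim : Set E
  isCompact : ∀ n, IsCompact (seq n)
  convex : ∀ n, Convex ℝ (seq n)
  antitone : Antitone seq
  iInter_eq : ⋂ n, seq n = lim
  ne : ∀ n, φ (seq n) ≠ φ lim

namespace BadSequence

variable {φ : Set E → ℝ}

instance : Preorder (BadSequence φ) where
  le B' B := ∀ n, B'.seq n ⊆ B.seq n
  le_refl _ _ := subset_rfl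
  le_trans _ _ _ h₁ h₂ n := (h₁ n).trans (h₂ n)

theorem lim_subset_seq (B : BadSequence φ) (n : ℕ) : B.lim ⊆ B.seq n :=
  B.iInter_eq ▸ iInter_subset _ n

theorem lim_mono {B' B : BadSequence φ} (h : B' ≤ B) : B'.lim ⊆ B.lim := by
  rw [← B'.iInter_eq, ← B.iInter_eq]
  exact iInter_mono h

theorem convex_lim (B : BadSequence φ) : Convex ℝ B.lim :=
  B.iInter_eq ▸ convex_iInter B.convex

theorem exists_of_frequently {K : ℕ → Set E} (hK : ∀ n, IsCompact (K n))
    (hKc : ∀ n, Convex ℝ (K n)) (hKa : Antitone K) {L : Set E} (hKL : ⋂ n, K n = L)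
    (hfreq : ∃ᶠ n in atTop, φ (K n) ≠ φ L) :
    ∃ B : BadSequence φ, B.lim = L ∧ ∀ n, B.seq n ⊆ K n := by
  obtain ⟨σ, hσ, hne⟩ := extraction_of_frequently_atTop hfreq
  exact ⟨⟨K ∘ σ, L, fun n => hK _, fun n => hKc _, hKa.comp_monotone hσ.monotone,
    (hKa.iInter_comp_tendsto_atTop hσ.tendsto_atTop).trans hKL, hne⟩,
    rfl, fun n => hKa hσ.le_apply⟩

variable [T2Space E]

theorem isCompact_lim (B : BadSequence φ) : IsCompact B.lim :=
  (B.isCompact 0).of_isClosed_subset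
    (B.iInter_eq ▸ isClosed_iInter fun n => (B.isCompact n).isClosed) (B.lim_subset_seq 0)

theorem lim_nonempty (B : BadSequence φ) : B.lim.Nonempty := by
  by_cases h : ∀ n, (B.seq n).Nonempty
  · rw [← B.iInter_eq]
    exact IsCompact.nonempty_iInter_of_sequence_nonempty_isCompact_isClosed _
      (fun n => B.antitone n.le_succ) h (B.isCompact 0) fun n => (B.isCompact n).isClosed
  · obtain ⟨n, hn⟩ := not_forall.1 h
    rw [not_nonempty_iff_eq_empty] at hn
    have hlim : B.lim = ∅ := subset_empty_iff.1 (hn ▸ B.lim_subset_seq n)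
    exact absurd (by rw [hn, hlim]) (B.ne n)

theorem exists_le_lim_subset (hφ : IsConvexValuation φ) (B : BadSequence φ)
    (C : ClosedConvexCover E) : ∃ B' ≤ B, B'.lim ⊆ C.left ∨ B'.lim ⊆ C.right := by
  have cut : ∀ S : Set E, IsClosed S → Convex ℝ S → (∀ B' ≤ B, ¬B'.lim ⊆ S) →
      ∀ᶠ n in atTop, φ (B.seq n ∩ S) = φ (B.lim ∩ S) := by
    intro S hS hSc hno
    by_contra hev
    obtain ⟨B', hlim, hseq⟩ := exists_of_frequently (fun n => (B.isCompact n).inter_right hS)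
      (fun n => (B.convex n).inter hSc) (fun m n h => inter_subset_inter_left S (B.antitone h))
      (by rw [← iInter_inter, B.iInter_eq]) (not_eventually.1 hev)
    exact hno B' (fun n => (hseq n).trans inter_subset_left) (hlim ▸ inter_subset_right)
  by_contra! h
  obtain ⟨n, h_left, h_right, h_both⟩ :=
    ((cut _ C.isClosed_left C.convex_left fun B' hB' => (h B' hB').1).and <|
      (cut _ C.isClosed_right C.convex_right fun B' hB' => (h B' hB').2).and <|
      cut _ (C.isClosed_left.inter C.isClosed_right) (C.convex_left.inter C.convex_right)
        fun B' hB' hs => (h B' hB').1 (hs.trans inter_subset_left)).exists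
  have h_seq := hφ.add_inter_eq C (B.isCompact n) (B.convex n)
  have h_lim := hφ.add_inter_eq C B.isCompact_lim B.convex_lim
  exact B.ne n (by linarith)

theorem exists_antitone_forall_lim_subset (hφ : IsConvexValuation φ) {N : Type*} [Countable N]
    (C : N → ClosedConvexCover E) (B : BadSequence φ) :
    ∃ B' : ℕ → BadSequence φ, Antitone B' ∧
      ∀ i, ∃ k, (B' k).lim ⊆ (C i).left ∨ (B' k).lim ⊆ (C i).right := by
  rcases isEmpty_or_nonempty N with _ | _
  · exact ⟨fun _ => B, antitone_const, isEmptyElim⟩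
  obtain ⟨e, he⟩ := exists_surjective_nat N
  choose next next_le next_subset using fun k (B : BadSequence φ) =>
    B.exists_le_lim_subset hφ (C (e k))
  let B' : ℕ → BadSequence φ := fun k => Nat.rec B next k
  refine ⟨B', antitone_nat_of_succ_le fun k => next_le k (B' k), fun i => ?_⟩
  obtain ⟨k, rfl⟩ := he i
  exact ⟨k + 1, next_subset k (B' k)⟩

theorem nonempty_iInter_lim {B : ℕ → BadSequence φ} (hB : Antitone B) :
    (⋂ k, (B k).lim).Nonempty :=
  IsCompact.nonempty_iInter_of_sequence_nonempty_isCompact_isClosed _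
    (fun k => lim_mono (hB k.le_succ)) (fun k => (B k).lim_nonempty) (B 0).isCompact_lim
    fun k => (B k).isCompact_lim.isClosed

/-- Along the diagonal `k ↦ (B k).seq k`, which decreases to the same set as the limits, `φ`
differs from its values at the limits. -/
theorem not_sigmaContinuousAt_iInter_lim (hint : ∀ K : Set E, ∃ m : ℤ, φ K = m)
    {B : ℕ → BadSequence φ} (hB : Antitone B) : ¬SigmaContinuousAt φ (⋂ k, (B k).lim) := by
  intro hcont
  have hdiag : ⋂ k, (B k).seq k = ⋂ k, (B k).lim := by
    refine subset_antisymm (fun y hy => mem_iInter.2 fun k => ?_)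
      (iInter_mono fun k => (B k).lim_subset_seq k)
    rw [← (B k).iInter_eq]
    exact mem_iInter.2 fun n => (B k).antitone (le_max_right k n)
      (hB (le_max_left k n) _ (mem_iInter.1 hy (max k n)))
  have h_diag := hcont (fun k => (B k).seq k) (fun k => (B k).isCompact k)
    (fun k => (B k).convex k) (fun k => hB k.le_succ _ |>.trans ((B k).antitone k.le_succ)) hdiag
  have h_lim := hcont (fun k => (B k).lim) (fun k => (B k).isCompact_lim)
    (fun k => (B k).convex_lim) (fun k => lim_mono (hB k.le_succ)) rfl
  obtain ⟨k, hk_diag, hk_lim⟩ := ((eventually_eq_of_tendsto_of_forall_int (fun k => hint _)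
    (hint _) h_diag).and (eventually_eq_of_tendsto_of_forall_int (fun k => hint _)
    (hint _) h_lim)).exists
  exact (B k).ne k (hk_diag.trans hk_lim.symm)

end BadSequence

theorem sigmaContinuousAt_of_forall_singleton [T2Space E] {ι : Type*} [Countable ι]
    (ℓ : ι → E →L[ℝ] ℝ) (hℓ : ∀ x y, (∀ i, ℓ i x = ℓ i y) → x = y) {φ : Set E → ℝ}
    (hint : ∀ K : Set E, ∃ m : ℤ, φ K = m) (hφ : IsConvexValuation φ)
    (hsingle : ∀ x, SigmaContinuousAt φ {x}) (L : Set E) : SigmaContinuousAt φ L := by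
  intro K hK hKc hKd hKL
  by_contra hT
  have hfreq : ∃ᶠ n in atTop, φ (K n) ≠ φ L := fun hev =>
    hT (tendsto_const_nhds.congr' (hev.mono fun n hn => (not_not.1 hn).symm))
  obtain ⟨B₀, -, -⟩ :=
    BadSequence.exists_of_frequently hK hKc (antitone_nat_of_succ_le hKd) hKL hfreq
  obtain ⟨B, hB, hcut⟩ := B₀.exists_antitone_forall_lim_subset hφ
    fun p : ι × ℚ => ClosedConvexCover.halfSpaces (ℓ p.1) p.2
  have hsub : (⋂ k, (B k).lim).Subsingleton :=
    subsingleton_of_forall_rat_le_or_ge (fun i => ℓ i) hℓ fun i q => by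
      obtain ⟨k, hk⟩ := hcut (i, q)
      exact hk.imp (iInter_subset _ k).trans (iInter_subset _ k).trans
  obtain ⟨x, hx⟩ := BadSequence.nonempty_iInter_lim hB
  exact BadSequence.not_sigmaContinuousAt_iInter_lim hint hB
    (hsub.eq_singleton_of_mem hx ▸ hsingle x)

theorem sigma_continuity_from_singletons_general (d : ℕ)
    (φ : Set (EuclideanSpace ℝ (Fin d)) → ℝ)
    (hint : ∀ K : Set (EuclideanSpace ℝ (Fin d)), ∃ m : ℤ, φ K = m)
    (hadd : ∀ K L : Set (EuclideanSpace ℝ (Fin d)),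
      IsCompact K → Convex ℝ K → IsCompact L → Convex ℝ L → Convex ℝ (K ∪ L) →
      φ (K ∪ L) + φ (K ∩ L) = φ K + φ L)
    (hsc_single : ∀ (K : ℕ → Set (EuclideanSpace ℝ (Fin d))) (x : EuclideanSpace ℝ (Fin d)),
      (∀ n, IsCompact (K n)) → (∀ n, Convex ℝ (K n)) → (∀ n, K (n + 1) ⊆ K n) →
      (⋂ n, K n) = {x} →
      Tendsto (fun n => φ (K n)) atTop (nhds (φ {x}))) :
    ∀ (K : ℕ → Set (EuclideanSpace ℝ (Fin d))) (L : Set (EuclideanSpace ℝ (Fin d))),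
      (∀ n, IsCompact (K n)) → (∀ n, Convex ℝ (K n)) → (∀ n, K (n + 1) ⊆ K n) →
      IsCompact L → Convex ℝ L → (⋂ n, K n) = L →
      Tendsto (fun n => φ (K n)) atTop (nhds (φ L)) := by
  intro K L hK hKc hKd _ _ hKL
  exact sigmaContinuousAt_of_forall_singleton EuclideanSpace.proj (fun x y h => PiLp.ext h)
    hint hadd (fun x K => hsc_single K x) L K hK hKc hKd hKL

/-- An integer-valued valuation on compact convex subsets of ℝ^d that is σ-continuous at
singletons is σ-continuous at every compact convex set. -/
theorem sigma_continuity_from_singletons (d : ℕ)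
    (φ : Set (EuclideanSpace ℝ (Fin d)) → ℝ)
    (hint : ∀ K : Set (EuclideanSpace ℝ (Fin d)), ∃ m : ℤ, φ K = m)
    (hempty : φ ∅ = 0)
    (hadd : ∀ K L : Set (EuclideanSpace ℝ (Fin d)),
      IsCompact K → Convex ℝ K → IsCompact L → Convex ℝ L → Convex ℝ (K ∪ L) →
      φ (K ∪ L) + φ (K ∩ L) = φ K + φ L)
    (hsc_single : ∀ (K : ℕ → Set (EuclideanSpace ℝ (Fin d))) (x : EuclideanSpace ℝ (Fin d)),
      (∀ n, IsCompact (K n)) → (∀ n, Convex ℝ (K n)) → (∀ n, K (n + 1) ⊆ K n) →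
      (⋂ n, K n) = {x} →
      Tendsto (fun n => φ (K n)) atTop (nhds (φ {x}))) :
    ∀ (K : ℕ → Set (EuclideanSpace ℝ (Fin d))) (L : Set (EuclideanSpace ℝ (Fin d))),
      (∀ n, IsCompact (K n)) → (∀ n, Convex ℝ (K n)) → (∀ n, K (n + 1) ⊆ K n) →
      IsCompact L → Convex ℝ L → (⋂ n, K n) = L →
      Tendsto (fun n => φ (K n)) atTop (nhds (φ L)) :=
  sigma_continuity_from_singletons_general d φ hint hadd hsc_single
end

section
/- Let φ and φ' be integer-valued σ-continuous valuations on compact convex subsets of ℝ^d that coincide on all singletons: φ({x}) = φ'({x}) for every x ∈ ℝ^d. Then φ = φ' on all compact convex sets. -/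
open Filter Set Topology

/-!
The difference `ψ = φ - φ'` is an integer-valued σ-continuous valuation vanishing on `∅` and on
points; we show `ψ K = 0` by induction on the number of coordinates that are not constant on
`K`. For one such coordinate `f`, the sections `K ∩ {f = t}` are killed by induction, so
additivity gives `g u - g t = ψ (K ∩ {t ≤ f ≤ u})` for `g t = ψ (K ∩ {f ≤ t})`. Decreasing
slabs and decreasing sublevel sets then make `g` continuous from the left and from the right
along monotone sequences. An integer-valued `g` that is `0` left of `K` can therefore never
become nonzero: at the infimum of its support it would have to jump.
-/

variable {E : Type*} [TopologicalSpace E] [AddCommGroup E] [Module ℝ E]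

def IsValuation (ψ : Set E → ℝ) : Prop :=
  ∀ K L : Set E, IsCompact K → Convex ℝ K → IsCompact L → Convex ℝ L → Convex ℝ (K ∪ L) →
    ψ (K ∪ L) + ψ (K ∩ L) = ψ K + ψ L

def IsSigmaContinuous (ψ : Set E → ℝ) : Prop :=
  ∀ (K : ℕ → Set E) (L : Set E), (∀ n, IsCompact (K n)) → (∀ n, Convex ℝ (K n)) →
    (∀ n, K (n + 1) ⊆ K n) → IsCompact L → Convex ℝ L → (⋂ n, K n) = L →
    Tendsto (fun n => ψ (K n)) atTop (𝓝 (ψ L))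

theorem IsValuation.sub {φ φ' : Set E → ℝ} (h : IsValuation φ) (h' : IsValuation φ') :
    IsValuation (φ - φ') := fun K L hK hKc hL hLc hKL => by
  simp only [Pi.sub_apply]
  linarith [h K L hK hKc hL hLc hKL, h' K L hK hKc hL hLc hKL]

theorem IsSigmaContinuous.sub {φ φ' : Set E → ℝ} (h : IsSigmaContinuous φ)
    (h' : IsSigmaContinuous φ') : IsSigmaContinuous (φ - φ') :=
  fun K L hK hKc hanti hL hLc hKL =>
    (h K L hK hKc hanti hL hLc hKL).sub (h' K L hK hKc hanti hL hLc hKL)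

theorem eventually_eq_zero_of_tendsto_zero_of_int {α : Type*} {l : Filter α} {u : α → ℝ}
    (hint : ∀ a, ∃ m : ℤ, u a = m) (h : Tendsto u l (𝓝 0)) : ∀ᶠ a in l, u a = 0 := by
  choose m hm using hint
  have hm0 : Tendsto m l (𝓝 0) := Int.isClosedEmbedding_coe_real.isEmbedding.tendsto_nhds_iff.mpr
    (by simpa only [funext hm, Function.comp_def, Int.cast_zero] using h)
  rw [nhds_discrete, tendsto_pure] at hm0
  filter_upwards [hm0] with a ha
  rw [hm, ha, Int.cast_zero]

section Sweep

variable {ψ : Set E → ℝ} (f : E →L[ℝ] ℝ) {K : Set E}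

theorem IsSigmaContinuous.tendsto_inter_preimage (hσ : IsSigmaContinuous ψ) (hK : IsCompact K)
    (hKc : Convex ℝ K) (S : ℕ → Set ℝ) (hS : ∀ n, IsClosed (S n)) (hSc : ∀ n, Convex ℝ (S n))
    (hanti : Antitone S) :
    Tendsto (fun n => ψ (K ∩ f ⁻¹' S n)) atTop (𝓝 (ψ (K ∩ f ⁻¹' ⋂ n, S n))) :=
  hσ _ _ (fun n => hK.inter_right ((hS n).preimage f.continuous))
    (fun n => hKc.inter ((hSc n).linear_preimage f.toLinearMap))
    (fun n => inter_subset_inter_right _ (preimage_mono (hanti n.le_succ)))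
    (hK.inter_right ((isClosed_iInter hS).preimage f.continuous))
    (hKc.inter ((convex_iInter hSc).linear_preimage f.toLinearMap))
    (by rw [preimage_iInter, inter_iInter])

theorem IsValuation.sublevel_add_section (hadd : IsValuation ψ) (hK : IsCompact K)
    (hKc : Convex ℝ K) {t u : ℝ} (htu : t ≤ u) :
    ψ (K ∩ f ⁻¹' Iic u) + ψ (K ∩ f ⁻¹' {t}) = ψ (K ∩ f ⁻¹' Iic t) + ψ (K ∩ f ⁻¹' Icc t u) := by
  have hunion : Iic t ∪ Icc t u = Iic u := Iic_union_Icc_eq_Iic htu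
  have hinter : Iic t ∩ Icc t u = {t} := by
    ext x
    simp only [mem_inter_iff, mem_Iic, mem_Icc, mem_singleton_iff]
    constructor
    · rintro ⟨h₁, h₂, -⟩
      exact le_antisymm h₁ h₂
    · rintro rfl
      exact ⟨le_rfl, le_rfl, htu⟩
  have key := hadd (K ∩ f ⁻¹' Iic t) (K ∩ f ⁻¹' Icc t u)
    (hK.inter_right (isClosed_Iic.preimage f.continuous))
    (hKc.inter ((convex_Iic t).linear_preimage f.toLinearMap))
    (hK.inter_right (isClosed_Icc.preimage f.continuous))
    (hKc.inter ((convex_Icc t u).linear_preimage f.toLinearMap))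
  rw [← inter_union_distrib_left, ← preimage_union, hunion, ← inter_inter_distrib_left,
    ← preimage_inter, hinter] at key
  exact key (hKc.inter ((convex_Iic u).linear_preimage f.toLinearMap))


theorem IsValuation.sublevel_eq_zero_of_forall_lt (hadd : IsValuation ψ)
    (hσ : IsSigmaContinuous ψ) (hK : IsCompact K) (hKc : Convex ℝ K)
    (hsec : ∀ t, ψ (K ∩ f ⁻¹' {t}) = 0) {s : ℝ} (hlt : ∀ t < s, ψ (K ∩ f ⁻¹' Iic t) = 0) :
    ψ (K ∩ f ⁻¹' Iic s) = 0 := by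
  obtain ⟨v, hv_mono, hv_lt, hv_lim⟩ := exists_seq_strictMono_tendsto s
  have hslab : ∀ n, ψ (K ∩ f ⁻¹' Icc (v n) s) = ψ (K ∩ f ⁻¹' Iic s) := fun n => by
    linarith [hadd.sublevel_add_section f hK hKc (hv_lt n).le, hsec (v n), hlt _ (hv_lt n)]
  have hinter : ⋂ n, Icc (v n) s = {s} := by
    ext x
    simp only [mem_iInter, mem_Icc, mem_singleton_iff]
    constructor
    · intro hx
      exact le_antisymm (hx 0).2 (le_of_tendsto' hv_lim fun n => (hx n).1)
    · rintro rfl n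
      exact ⟨(hv_lt n).le, le_rfl⟩
  have hlim := hσ.tendsto_inter_preimage f hK hKc (fun n => Icc (v n) s) (fun _ => isClosed_Icc)
    (fun _ => convex_Icc _ _) (fun _ _ hmn => Icc_subset_Icc_left (hv_mono.monotone hmn))
  rw [hinter, hsec, funext hslab] at hlim
  exact tendsto_nhds_unique tendsto_const_nhds hlim

theorem IsSigmaContinuous.eventually_sublevel_eq_zero (hσ : IsSigmaContinuous ψ)
    (hint : ∀ L, ∃ m : ℤ, ψ L = m) (hK : IsCompact K) (hKc : Convex ℝ K) {s : ℝ}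
    (hs : ψ (K ∩ f ⁻¹' Iic s) = 0) {u : ℕ → ℝ} (hu : Antitone u)
    (hlim : Tendsto u atTop (𝓝 s)) : ∀ᶠ n in atTop, ψ (K ∩ f ⁻¹' Iic (u n)) = 0 := by
  have hinter : ⋂ n, Iic (u n) = Iic s := by
    ext x
    simp only [mem_iInter, mem_Iic]
    exact ⟨fun hx => ge_of_tendsto' hlim hx, fun hx n => hx.trans (hu.le_of_tendsto hlim n)⟩
  have hconv := hσ.tendsto_inter_preimage f hK hKc (fun n => Iic (u n)) (fun _ => isClosed_Iic)
    (fun _ => convex_Iic _) (fun _ _ hmn => Iic_subset_Iic.mpr (hu hmn))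
  rw [hinter, hs] at hconv
  exact eventually_eq_zero_of_tendsto_zero_of_int (fun _ => hint _) hconv

theorem IsValuation.eq_zero_of_sections_eq_zero (hadd : IsValuation ψ)
    (hσ : IsSigmaContinuous ψ) (hint : ∀ L, ∃ m : ℤ, ψ L = m) (hempty : ψ ∅ = 0)
    (hK : IsCompact K) (hKc : Convex ℝ K) (hsec : ∀ t, ψ (K ∩ f ⁻¹' {t}) = 0) : ψ K = 0 := by
  set g := fun t => ψ (K ∩ f ⁻¹' Iic t)
  obtain ⟨a, ha⟩ := hK.bddBelow_image f.continuous.continuousOn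
  obtain ⟨b, hb⟩ := hK.bddAbove_image f.continuous.continuousOn
  have hbelow : ∀ t < a, g t = 0 := fun t ht => by
    have hempty' : K ∩ f ⁻¹' Iic t = ∅ := eq_empty_of_forall_notMem fun x hx =>
      (ht.trans_le (ha ⟨x, hx.1, rfl⟩)).not_ge hx.2
    simp only [g, hempty', hempty]
  have hgb : g b = ψ K := congrArg ψ (inter_eq_left.mpr fun x hx => hb ⟨x, hx, rfl⟩)
  rw [← hgb]
  by_contra hgb0
  set N := {t | g t ≠ 0}
  have hN : N.Nonempty := ⟨b, hgb0⟩
  have hNbdd : BddBelow N := ⟨a, fun t ht => not_lt.mp fun hta => ht (hbelow t hta)⟩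
  have hs : g (sInf N) = 0 := hadd.sublevel_eq_zero_of_forall_lt f hσ hK hKc hsec
    fun t ht => not_not.mp (notMem_of_lt_csInf ht hNbdd)
  obtain ⟨u, hu, -, hlim, huN⟩ :=
    (isGLB_csInf hN hNbdd).exists_seq_strictAnti_tendsto_of_notMem (fun h => h hs) hN
  obtain ⟨n, hn⟩ := (hσ.eventually_sublevel_eq_zero f hint hK hKc hs hu.antitone hlim).exists
  exact huN n hn

end Sweep

theorem IsValuation.eq_zero_of_separating {ι : Type*} [Fintype ι] {ψ : Set E → ℝ}
    (hadd : IsValuation ψ) (hσ : IsSigmaContinuous ψ) (hint : ∀ L, ∃ m : ℤ, ψ L = m)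
    (hempty : ψ ∅ = 0) (hsingle : ∀ x, ψ {x} = 0) (b : ι → E →L[ℝ] ℝ)
    (hb : ∀ x y, (∀ i, b i x = b i y) → x = y) {K : Set E} (hK : IsCompact K)
    (hKc : Convex ℝ K) : ψ K = 0 := by
  classical
  suffices h : ∀ s : Finset ι, ∀ K : Set E, IsCompact K → Convex ℝ K →
      (∀ x ∈ K, ∀ y ∈ K, ∀ i ∉ s, b i x = b i y) → ψ K = 0 from
    h Finset.univ K hK hKc fun _ _ _ _ i hi => absurd (Finset.mem_univ i) hi
  intro s
  induction s using Finset.induction_on with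
  | empty =>
    intro K _ _ hconst
    have hsub : K.Subsingleton := fun x hx y hy =>
      hb x y fun i => hconst x hx y hy i (Finset.notMem_empty i)
    obtain rfl | ⟨x, rfl⟩ := hsub.eq_empty_or_singleton
    exacts [hempty, hsingle x]
  | insert j s _ ih =>
    intro K hK hKc hconst
    refine hadd.eq_zero_of_sections_eq_zero (b j) hσ hint hempty hK hKc fun t => ?_
    refine ih _ (hK.inter_right (isClosed_singleton.preimage (b j).continuous))
      (hKc.inter ((convex_singleton t).linear_preimage (b j).toLinearMap)) ?_
    rintro x ⟨hx, hxt⟩ y ⟨hy, hyt⟩ i hi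
    by_cases hij : i = j
    · subst hij
      exact hxt.trans hyt.symm
    · exact hconst x hx y hy i (by simp [hij, hi])

theorem IsValuation.eq_zero_of_finiteDimensional [IsTopologicalAddGroup E] [ContinuousSMul ℝ E]
    [T2Space E] [FiniteDimensional ℝ E] {ψ : Set E → ℝ} (hadd : IsValuation ψ)
    (hσ : IsSigmaContinuous ψ) (hint : ∀ L, ∃ m : ℤ, ψ L = m) (hempty : ψ ∅ = 0)
    (hsingle : ∀ x, ψ {x} = 0) {K : Set E} (hK : IsCompact K) (hKc : Convex ℝ K) : ψ K = 0 :=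
  let B := Module.finBasis ℝ E
  hadd.eq_zero_of_separating hσ hint hempty hsingle
    (fun i => LinearMap.toContinuousLinearMap (B.coord i)) (fun _ _ h => B.ext_elem h) hK hKc

/-- Two integer-valued σ-continuous valuations on compact convex subsets of ℝ^d that
coincide on all singletons coincide everywhere. -/
theorem valuations_eq_of_eq_on_singletons (d : ℕ)
    (φ φ' : Set (EuclideanSpace ℝ (Fin d)) → ℝ)
    (hint : ∀ K, ∃ m : ℤ, φ K = m) (hint' : ∀ K, ∃ m : ℤ, φ' K = m)
    (hempty : φ ∅ = 0) (hempty' : φ' ∅ = 0)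
    (hadd : ∀ K L : Set (EuclideanSpace ℝ (Fin d)),
      IsCompact K → Convex ℝ K → IsCompact L → Convex ℝ L → Convex ℝ (K ∪ L) →
      φ (K ∪ L) + φ (K ∩ L) = φ K + φ L)
    (hadd' : ∀ K L : Set (EuclideanSpace ℝ (Fin d)),
      IsCompact K → Convex ℝ K → IsCompact L → Convex ℝ L → Convex ℝ (K ∪ L) →
      φ' (K ∪ L) + φ' (K ∩ L) = φ' K + φ' L)
    (hsc : ∀ (K : ℕ → Set (EuclideanSpace ℝ (Fin d))) (L : Set (EuclideanSpace ℝ (Fin d))),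
      (∀ n, IsCompact (K n)) → (∀ n, Convex ℝ (K n)) → (∀ n, K (n + 1) ⊆ K n) →
      IsCompact L → Convex ℝ L → (⋂ n, K n) = L →
      Tendsto (fun n => φ (K n)) atTop (nhds (φ L)))
    (hsc' : ∀ (K : ℕ → Set (EuclideanSpace ℝ (Fin d))) (L : Set (EuclideanSpace ℝ (Fin d))),
      (∀ n, IsCompact (K n)) → (∀ n, Convex ℝ (K n)) → (∀ n, K (n + 1) ⊆ K n) →
      IsCompact L → Convex ℝ L → (⋂ n, K n) = L →
      Tendsto (fun n => φ' (K n)) atTop (nhds (φ' L)))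
    (hsingle : ∀ x : EuclideanSpace ℝ (Fin d), φ {x} = φ' {x}) :
    ∀ K : Set (EuclideanSpace ℝ (Fin d)), IsCompact K → Convex ℝ K → φ K = φ' K := by
  intro K hK hKc
  have hint_sub : ∀ L, ∃ m : ℤ, (φ - φ') L = m := fun L => by
    obtain ⟨m, hm⟩ := hint L
    obtain ⟨m', hm'⟩ := hint' L
    exact ⟨m - m', by simp [hm, hm']⟩
  have hψ : (φ - φ') K = 0 := (IsValuation.sub hadd hadd').eq_zero_of_finiteDimensional
    (IsSigmaContinuous.sub hsc hsc') hint_sub (by simp [hempty, hempty'])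
    (fun x => sub_eq_zero.mpr (hsingle x)) hK hKc
  exact sub_eq_zero.mp hψ
end

section
/- Every simple integer-valued σ-continuous valuation on compact convex subsets of ℝ^d is identically zero, where simple means that φ vanishes on all compact convex sets of dimension strictly less than d (in particular on singletons when d ≥ 1). -/
/-! Slice a compact convex `K` by the level sets of a nonzero linear functional `ℓ` and put
`f t = φ (K ∩ {ℓ ≤ t})`. Each slice `K ∩ {ℓ = t}` is lower-dimensional, so additivity gives
`f t + φ (K ∩ {ℓ ≥ t}) = φ K`. By σ-continuity and integrality, `f` is locally constant to the right
of every `t`, and for the same reason so is `t ↦ φ (K ∩ {ℓ ≥ t})` to the left; hence `f` is locally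
constant on `ℝ`, so `φ K = f (max ℓ) = f (min ℓ - 1) = φ ∅ = 0`, the empty set being
lower-dimensional too. -/

open Filter Set Topology Module

theorem eventually_eq_of_tendsto_of_forall_intCast {ι : Type*} {l : Filter ι} {u : ι → ℝ} {a : ℝ}
    (hu : ∀ i, ∃ m : ℤ, u i = m) (ha : ∃ m : ℤ, a = m) (h : Tendsto u l (𝓝 a)) :
    ∀ᶠ i in l, u i = a := by
  choose m hm using hu
  obtain ⟨k, rfl⟩ := ha
  have hmk : Tendsto m l (𝓝 k) :=
    Int.isUniformEmbedding_coe_real.isInducing.tendsto_nhds_iff.2 <| by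
      simpa only [Function.comp_def, ← hm] using h
  rw [nhds_discrete, tendsto_pure] at hmk
  filter_upwards [hmk] with i hi
  rw [hm, hi]

theorem eventually_nhdsGE_eq_of_antitone_seq {α β : Type*} [LinearOrder α] [TopologicalSpace α]
    [OrderTopology α] [FirstCountableTopology α] {f : α → β} {t : α}
    (h : ∀ u : ℕ → α, Antitone u → (∀ n, t ≤ u n) → Tendsto u atTop (𝓝 t) →
      ∀ᶠ n in atTop, f (u n) = f t) :
    ∀ᶠ x in 𝓝[≥] t, f x = f t := by
  by_contra hne
  have hfreq : ∃ᶠ x in 𝓝 t, f x ≠ f t ∧ x ∈ Ici t :=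
    frequently_nhdsWithin_iff.1 (not_eventually.1 hne)
  have hglb : IsGLB {x | f x ≠ f t ∧ x ∈ Ici t} t :=
    isGLB_of_mem_closure (fun _ hx => hx.2) (mem_closure_iff_frequently.2 hfreq)
  obtain ⟨u, hu, htu, hlim, hmem⟩ := hglb.exists_seq_antitone_tendsto hfreq.exists
  obtain ⟨n, hn⟩ := (h u hu htu hlim).exists
  exact (hmem n).1 hn

theorem finrank_vectorSpan_inter_preimage_singleton_lt {K V : Type*} [Field K] [AddCommGroup V]
    [Module K V] [FiniteDimensional K V] {ℓ : V →ₗ[K] K} (hℓ : ℓ ≠ 0) (s : Set V) (t : K) :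
    finrank K (vectorSpan K (s ∩ ℓ ⁻¹' {t})) < finrank K V := by
  have hle : vectorSpan K (s ∩ ℓ ⁻¹' {t}) ≤ LinearMap.ker ℓ := by
    refine Submodule.span_le.2 ?_
    rintro _ ⟨x, ⟨-, hx⟩, y, ⟨-, hy⟩, rfl⟩
    simp_all
  exact (Submodule.finrank_mono hle).trans_lt
    (Submodule.finrank_lt (by rwa [Ne, LinearMap.ker_eq_top]))

section Caps

variable {E : Type*} [AddCommGroup E] [Module ℝ E] [TopologicalSpace E] {φ : Set E → ℝ}
  {K : Set E}

theorem apply_inter_preimage_Iic_add_apply_inter_preimage_Ici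
    (hadd : ∀ K L : Set E, IsCompact K → Convex ℝ K → IsCompact L → Convex ℝ L →
      Convex ℝ (K ∪ L) → φ (K ∪ L) + φ (K ∩ L) = φ K + φ L)
    (hKc : IsCompact K) (hKv : Convex ℝ K) (ℓ : E →L[ℝ] ℝ) (t : ℝ)
    (hslice : φ (K ∩ ℓ ⁻¹' {t}) = 0) :
    φ (K ∩ ℓ ⁻¹' Iic t) + φ (K ∩ ℓ ⁻¹' Ici t) = φ K := by
  have hunion : K ∩ ℓ ⁻¹' Iic t ∪ K ∩ ℓ ⁻¹' Ici t = K := by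
    rw [← inter_union_distrib_left, ← preimage_union, Iic_union_Ici, preimage_univ, inter_univ]
  have hinter : K ∩ ℓ ⁻¹' Iic t ∩ (K ∩ ℓ ⁻¹' Ici t) = K ∩ ℓ ⁻¹' {t} := by
    rw [← inter_inter_distrib_left, ← preimage_inter, Iic_inter_Ici, Icc_self]
  have h := hadd _ _ (hKc.inter_right (isClosed_Iic.preimage ℓ.continuous))
    (hKv.inter ((convex_Iic t).linear_preimage ℓ.toLinearMap))
    (hKc.inter_right (isClosed_Ici.preimage ℓ.continuous))
    (hKv.inter ((convex_Ici t).linear_preimage ℓ.toLinearMap)) (by rwa [hunion])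
  rwa [hunion, hinter, hslice, add_zero, eq_comm] at h

theorem eventually_nhdsGE_apply_inter_preimage_Iic (hint : ∀ K, ∃ m : ℤ, φ K = m)
    (hsc : ∀ (K : ℕ → Set E) (L : Set E),
      (∀ n, IsCompact (K n)) → (∀ n, Convex ℝ (K n)) → (∀ n, K (n + 1) ⊆ K n) →
      IsCompact L → Convex ℝ L → (⋂ n, K n) = L →
      Tendsto (fun n => φ (K n)) atTop (𝓝 (φ L)))
    (hKc : IsCompact K) (hKv : Convex ℝ K) (ℓ : E →L[ℝ] ℝ) (t : ℝ) :
    ∀ᶠ s in 𝓝[≥] t, φ (K ∩ ℓ ⁻¹' Iic s) = φ (K ∩ ℓ ⁻¹' Iic t) := by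
  refine eventually_nhdsGE_eq_of_antitone_seq fun u hu htu hlim => ?_
  have hIic : ⋂ n, Iic (u n) = Iic t :=
    ext fun x => ⟨fun hx => ge_of_tendsto' hlim (mem_iInter.1 hx), fun hx =>
      mem_iInter.2 fun n => hx.trans (htu n)⟩
  refine eventually_eq_of_tendsto_of_forall_intCast (fun _ => hint _) (hint _) <|
    hsc _ _ (fun n => hKc.inter_right (isClosed_Iic.preimage ℓ.continuous))
      (fun n => hKv.inter ((convex_Iic _).linear_preimage ℓ.toLinearMap))
      (fun n => inter_subset_inter_right K (preimage_mono (Iic_subset_Iic.2 (hu n.le_succ))))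
      (hKc.inter_right (isClosed_Iic.preimage ℓ.continuous))
      (hKv.inter ((convex_Iic t).linear_preimage ℓ.toLinearMap)) ?_
  rw [← inter_iInter, ← preimage_iInter, hIic]

theorem apply_eq_apply_empty_of_isLocallyConstant (hKc : IsCompact K) {ℓ : E →L[ℝ] ℝ}
    (hf : IsLocallyConstant fun t => φ (K ∩ ℓ ⁻¹' Iic t)) : φ K = φ ∅ := by
  obtain ⟨a, ha⟩ := (hKc.image ℓ.continuous).bddBelow
  obtain ⟨b, hb⟩ := (hKc.image ℓ.continuous).bddAbove
  have hbelow : K ∩ ℓ ⁻¹' Iic (a - 1) = ∅ := eq_empty_of_forall_notMem fun x hx => by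
    linarith [ha (mem_image_of_mem ℓ hx.1), show ℓ x ≤ a - 1 from hx.2]
  have habove : K ∩ ℓ ⁻¹' Iic b = K := inter_eq_left.2 fun x hx => hb (mem_image_of_mem ℓ hx)
  calc φ K = φ (K ∩ ℓ ⁻¹' Iic b) := by rw [habove]
    _ = φ (K ∩ ℓ ⁻¹' Iic (a - 1)) := hf.apply_eq_of_preconnectedSpace _ _
    _ = φ ∅ := by rw [hbelow]

end Caps

theorem simple_valuation_is_zero_general (d : ℕ) (hd : 0 < d)
    (φ : Set (EuclideanSpace ℝ (Fin d)) → ℝ)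
    (hint : ∀ K, ∃ m : ℤ, φ K = m)
    (hadd : ∀ K L : Set (EuclideanSpace ℝ (Fin d)),
      IsCompact K → Convex ℝ K → IsCompact L → Convex ℝ L → Convex ℝ (K ∪ L) →
      φ (K ∪ L) + φ (K ∩ L) = φ K + φ L)
    (hsc : ∀ (K : ℕ → Set (EuclideanSpace ℝ (Fin d))) (L : Set (EuclideanSpace ℝ (Fin d))),
      (∀ n, IsCompact (K n)) → (∀ n, Convex ℝ (K n)) → (∀ n, K (n + 1) ⊆ K n) →
      IsCompact L → Convex ℝ L → (⋂ n, K n) = L →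
      Tendsto (fun n => φ (K n)) atTop (nhds (φ L)))
    (hsimple : ∀ K : Set (EuclideanSpace ℝ (Fin d)), IsCompact K → Convex ℝ K →
      Module.finrank ℝ (vectorSpan ℝ K) < d → φ K = 0) :
    ∀ K : Set (EuclideanSpace ℝ (Fin d)), IsCompact K → Convex ℝ K → φ K = 0 := by
  intro K hKc hKv
  set ℓ : EuclideanSpace ℝ (Fin d) →L[ℝ] ℝ := EuclideanSpace.proj ⟨0, hd⟩
  have hℓ : (ℓ : EuclideanSpace ℝ (Fin d) →ₗ[ℝ] ℝ) ≠ 0 := fun h => by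
    simpa [ℓ] using congr($h (EuclideanSpace.single ⟨0, hd⟩ 1))
  have hsplit (t : ℝ) : φ (K ∩ ℓ ⁻¹' Iic t) + φ (K ∩ (-ℓ) ⁻¹' Iic (-t)) = φ K := by
    have hIci : (-ℓ) ⁻¹' Iic (-t) = ℓ ⁻¹' Ici t := by ext; simp
    rw [hIci]
    exact apply_inter_preimage_Iic_add_apply_inter_preimage_Ici hadd hKc hKv ℓ t
      (hsimple _ (hKc.inter_right (isClosed_singleton.preimage ℓ.continuous))
        (hKv.inter ((convex_singleton t).linear_preimage ℓ.toLinearMap))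
        ((finrank_vectorSpan_inter_preimage_singleton_lt hℓ K t).trans_eq
          finrank_euclideanSpace_fin))
  have hf : IsLocallyConstant fun t => φ (K ∩ ℓ ⁻¹' Iic t) := by
    refine (IsLocallyConstant.iff_eventually_eq _).2 fun t => ?_
    rw [← nhdsLE_sup_nhdsGE, eventually_sup]
    refine ⟨?_, eventually_nhdsGE_apply_inter_preimage_Iic hint hsc hKc hKv ℓ t⟩
    filter_upwards [tendsto_neg_nhdsLE.eventually
      (eventually_nhdsGE_apply_inter_preimage_Iic hint hsc hKc hKv (-ℓ) (-t))] with s hs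
    linarith [hsplit s, hsplit t]
  rw [apply_eq_apply_empty_of_isLocallyConstant hKc hf]
  exact hsimple ∅ isCompact_empty convex_empty (by rwa [vectorSpan_empty, finrank_bot])

/-- Every simple (vanishing on lower-dimensional compact convex sets) integer-valued
σ-continuous valuation on compact convex subsets of ℝ^d is identically zero. -/
theorem simple_valuation_is_zero (d : ℕ) (hd : 0 < d)
    (φ : Set (EuclideanSpace ℝ (Fin d)) → ℝ)
    (hint : ∀ K, ∃ m : ℤ, φ K = m)
    (hempty : φ ∅ = 0)
    (hadd : ∀ K L : Set (EuclideanSpace ℝ (Fin d)),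
      IsCompact K → Convex ℝ K → IsCompact L → Convex ℝ L → Convex ℝ (K ∪ L) →
      φ (K ∪ L) + φ (K ∩ L) = φ K + φ L)
    (hsc : ∀ (K : ℕ → Set (EuclideanSpace ℝ (Fin d))) (L : Set (EuclideanSpace ℝ (Fin d))),
      (∀ n, IsCompact (K n)) → (∀ n, Convex ℝ (K n)) → (∀ n, K (n + 1) ⊆ K n) →
      IsCompact L → Convex ℝ L → (⋂ n, K n) = L →
      Tendsto (fun n => φ (K n)) atTop (nhds (φ L)))
    (hsimple : ∀ K : Set (EuclideanSpace ℝ (Fin d)), IsCompact K → Convex ℝ K →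
      Module.finrank ℝ (vectorSpan ℝ K) < d → φ K = 0) :
    ∀ K : Set (EuclideanSpace ℝ (Fin d)), IsCompact K → Convex ℝ K → φ K = 0 :=
  simple_valuation_is_zero_general d hd φ hint hadd hsc hsimple
end

section
/- Let K, L be compact convex subsets of ℝ^d with K ∪ L convex, and let u be a unit vector. Write M_u = M \ (M ∩ H_u(M)) where H_u(M) is the supporting hyperplane of M with outer normal u (the set of points of M not attaining the maximum of ⟨u,·⟩ over M). Then (K ∪ L)_u = K_u ∪ L_u. -/
/-!
Let `f = ⟪u, ·⟫`. A point `x` of `K` that lies below the maximum of `f` on `K ∪ L` but attains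
the maximum of `f` on `K` must lie in `L`: pick `y ∈ L` with `f x < f y`; the open segment from
`x` to `y` lies in the convex set `K ∪ L` and `f` exceeds `f x` on it, so it misses `K` and lies
in `L`. Since `L` is closed and `x` is in the closure of that segment, `x ∈ L`.
-/

/-- `M` with its exposed face in direction `u` removed. -/
noncomputable def faceRemoved {d : ℕ} (M : Set (EuclideanSpace ℝ (Fin d)))
    (u : EuclideanSpace ℝ (Fin d)) : Set (EuclideanSpace ℝ (Fin d)) :=
  {x ∈ M | inner ℝ u x < sSup ((fun y => (inner ℝ u y : ℝ)) '' M)}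

section LinearFunctional

variable {E : Type*} [AddCommGroup E] [Module ℝ E] [TopologicalSpace E] [ContinuousAdd E]
  [ContinuousSMul ℝ E] {f : E →ₗ[ℝ] ℝ} {K L : Set E} {x : E}

theorem mem_of_isMaxOn_of_convex_union (hL : IsClosed L) (hU : Convex ℝ (K ∪ L))
    (hxK : x ∈ K) (hmax : IsMaxOn f K x) {y : E} (hyL : y ∈ L) (hxy : f x < f y) : x ∈ L := by
  have hsegL : openSegment ℝ x y ⊆ L := by
    intro z hz
    have hfz : f x < f z := by
      have : f z ∈ openSegment ℝ (f x) (f y) := by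
        rw [← f.coe_toAffineMap, ← image_openSegment]
        exact Set.mem_image_of_mem _ hz
      exact (openSegment_eq_Ioo hxy ▸ this).1
    refine (hU.openSegment_subset (Or.inl hxK) (Or.inr hyL) hz).resolve_left fun hzK => ?_
    exact (hmax hzK).not_gt hfz
  exact hL.closure_subset_iff.2 hsegL (segment_subset_closure_openSegment (left_mem_segment ℝ x y))

theorem lt_sSup_image_or_mem_of_lt_sSup_image_union (hKb : BddAbove (f '' K))
    (hLb : BddAbove (f '' L)) (hL : IsClosed L) (hU : Convex ℝ (K ∪ L)) (hxK : x ∈ K)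
    (hlt : f x < sSup (f '' (K ∪ L))) :
    f x < sSup (f '' K) ∨ x ∈ L ∧ f x < sSup (f '' L) := by
  refine or_iff_not_imp_left.2 fun hge => ?_
  have hmax : IsMaxOn f K x := fun z hz =>
    (le_csSup hKb (Set.mem_image_of_mem f hz)).trans (not_lt.1 hge)
  obtain ⟨_, ⟨y, hy, rfl⟩, hxy⟩ :=
    exists_lt_of_lt_csSup (Set.Nonempty.image f ⟨x, Or.inl hxK⟩) hlt
  have hyL : y ∈ L := hy.resolve_left fun hyK => (hmax hyK).not_gt hxy
  exact ⟨mem_of_isMaxOn_of_convex_union hL hU hxK hmax hyL hxy,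
    hxy.trans_le (le_csSup hLb (Set.mem_image_of_mem f hyL))⟩

end LinearFunctional

theorem faceRemoved_union_general {d : ℕ} (K L : Set (EuclideanSpace ℝ (Fin d)))
    (hKc : IsCompact K) (hLc : IsCompact L) (hU : Convex ℝ (K ∪ L))
    (u : EuclideanSpace ℝ (Fin d)) :
    faceRemoved (K ∪ L) u = faceRemoved K u ∪ faceRemoved L u := by
  set f : EuclideanSpace ℝ (Fin d) →ₗ[ℝ] ℝ := (innerSL ℝ u).toLinearMap
  have hf : (fun y => inner ℝ u y) = ⇑f := rfl
  have hbdd {M} (hM : IsCompact M) : BddAbove (f '' M) :=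
    (hM.image (innerSL ℝ u).continuous).bddAbove
  have hmono {M} (hM : M ⊆ K ∪ L) {x} (hx : x ∈ M) : sSup (f '' M) ≤ sSup (f '' (K ∪ L)) :=
    csSup_le_csSup (hbdd (hKc.union hLc)) ⟨f x, x, hx, rfl⟩ (Set.image_mono hM)
  ext x
  simp only [faceRemoved, hf, Set.mem_union, Set.mem_ofPred_eq]
  constructor
  · rintro ⟨hxK | hxL, hlt⟩
    · exact (lt_sSup_image_or_mem_of_lt_sSup_image_union (hbdd hKc) (hbdd hLc) hLc.isClosed
        hU hxK hlt).imp (⟨hxK, ·⟩) id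
    · rw [Set.union_comm] at hU hlt
      exact (lt_sSup_image_or_mem_of_lt_sSup_image_union (hbdd hLc) (hbdd hKc) hKc.isClosed
        hU hxL hlt).symm.imp id (⟨hxL, ·⟩)
  · rintro (⟨hxK, hlt⟩ | ⟨hxL, hlt⟩)
    · exact ⟨Or.inl hxK, hlt.trans_le (hmono Set.subset_union_left hxK)⟩
    · exact ⟨Or.inr hxL, hlt.trans_le (hmono Set.subset_union_right hxL)⟩

/-- If `K ∪ L` is convex then `(K ∪ L)_u = K_u ∪ L_u`. -/
theorem faceRemoved_union {d : ℕ} (K L : Set (EuclideanSpace ℝ (Fin d)))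
    (hKc : IsCompact K) (hKconv : Convex ℝ K) (hKne : K.Nonempty)
    (hLc : IsCompact L) (hLconv : Convex ℝ L) (hLne : L.Nonempty)
    (hU : Convex ℝ (K ∪ L))
    (u : EuclideanSpace ℝ (Fin d)) (hu : ‖u‖ = 1) :
    faceRemoved (K ∪ L) u = faceRemoved K u ∪ faceRemoved L u :=
  faceRemoved_union_general K L hKc hLc hU u
end

section
/- Let K, L be compact convex subsets of ℝ^d with K ∪ L convex, and let u be a unit vector. With M_u = {x ∈ M : ⟨u, x⟩ < sup_{y ∈ M} ⟨u, y⟩}, one has (K ∩ L)_u = K_u ∩ L_u. -/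
/-!
A segment from a point of `K` to a point of `L` lies in the convex set `K ∪ L`; being connected
and covered by the two closed sets, it meets `K ∩ L`. A linear functional takes at such a meeting
point a value at least the smaller of its values at the two endpoints. Taking the endpoints to be
maximisers on `K` and `L` shows that the maximum over `K ∩ L` is the smaller of the maxima over
`K` and `L`, so a point of `K ∩ L` lies strictly below the former iff it lies strictly below both.
-/

theorem LinearMap.min_le_of_mem_segment {E : Type*} [AddCommGroup E] [Module ℝ E]
    (f : E →ₗ[ℝ] ℝ) {x y z : E} (hz : z ∈ segment ℝ x y) :
    min (f x) (f y) ≤ f z := by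
  obtain ⟨a, b, ha, hb, hab, rfl⟩ := hz
  simpa only [map_add, map_smul] using Convex.min_le_combo (f x) (f y) ha hb hab

section

variable {E : Type*} [AddCommGroup E] [Module ℝ E] [TopologicalSpace E] [ContinuousAdd E]
  [ContinuousSMul ℝ E]

theorem segment_inter_inter_nonempty_of_convex_union {K L : Set E} (hK : IsClosed K)
    (hL : IsClosed L) (hU : Convex ℝ (K ∪ L)) {x y : E} (hx : x ∈ K) (hy : y ∈ L) :
    (segment ℝ x y ∩ (K ∩ L)).Nonempty :=
  isPreconnected_closed_iff.mp (convex_segment x y).isPreconnected K L hK hL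
    (hU.segment_subset (Or.inl hx) (Or.inr hy))
    ⟨x, left_mem_segment ℝ x y, hx⟩ ⟨y, right_mem_segment ℝ x y, hy⟩

variable [T2Space E]

theorem sSup_image_inter_eq_min_of_convex_union (f : E →L[ℝ] ℝ) {K L : Set E}
    (hKc : IsCompact K) (hKne : K.Nonempty) (hLc : IsCompact L) (hLne : L.Nonempty)
    (hU : Convex ℝ (K ∪ L)) :
    sSup (f '' (K ∩ L)) = min (sSup (f '' K)) (sSup (f '' L)) := by
  obtain ⟨xK, hxK, hfxK⟩ := (hKc.image f.continuous).sSup_mem (hKne.image f)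
  obtain ⟨xL, hxL, hfxL⟩ := (hLc.image f.continuous).sSup_mem (hLne.image f)
  obtain ⟨w, hw_seg, hw⟩ :=
    segment_inter_inter_nonempty_of_convex_union hKc.isClosed hLc.isClosed hU hxK hxL
  have hbdd : BddAbove (f '' (K ∩ L)) :=
    ((hKc.inter_right hLc.isClosed).image f.continuous).bddAbove
  apply le_antisymm
  · exact le_min
      (csSup_le_csSup (hKc.image f.continuous).bddAbove ⟨f w, w, hw, rfl⟩
        (Set.image_mono Set.inter_subset_left))
      (csSup_le_csSup (hLc.image f.continuous).bddAbove ⟨f w, w, hw, rfl⟩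
        (Set.image_mono Set.inter_subset_right))
  · calc min (sSup (f '' K)) (sSup (f '' L)) = min (f xK) (f xL) := by rw [hfxK, hfxL]
      _ ≤ f w := (f : E →ₗ[ℝ] ℝ).min_le_of_mem_segment hw_seg
      _ ≤ sSup (f '' (K ∩ L)) := le_csSup hbdd ⟨w, hw, rfl⟩

end

theorem faceRemoved_inter_general {d : ℕ} (K L : Set (EuclideanSpace ℝ (Fin d)))
    (hKc : IsCompact K) (hKne : K.Nonempty)
    (hLc : IsCompact L) (hLne : L.Nonempty)
    (hU : Convex ℝ (K ∪ L))
    (u : EuclideanSpace ℝ (Fin d)) :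
    faceRemoved (K ∩ L) u = faceRemoved K u ∩ faceRemoved L u := by
  have hsup : sSup ((fun y => inner ℝ u y) '' (K ∩ L)) =
      min (sSup ((fun y => inner ℝ u y) '' K)) (sSup ((fun y => inner ℝ u y) '' L)) :=
    sSup_image_inter_eq_min_of_convex_union (innerSL ℝ u) hKc hKne hLc hLne hU
  ext x
  simp only [faceRemoved, Set.mem_inter_iff, Set.mem_ofPred_eq, hsup, lt_min_iff,
    and_and_and_comm]

/-- If `K ∪ L` is convex then `(K ∩ L)_u = K_u ∩ L_u`. -/
theorem faceRemoved_inter {d : ℕ} (K L : Set (EuclideanSpace ℝ (Fin d)))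
    (hKc : IsCompact K) (hKconv : Convex ℝ K) (hKne : K.Nonempty)
    (hLc : IsCompact L) (hLconv : Convex ℝ L) (hLne : L.Nonempty)
    (hU : Convex ℝ (K ∪ L))
    (u : EuclideanSpace ℝ (Fin d)) (hu : ‖u‖ = 1) :
    faceRemoved (K ∩ L) u = faceRemoved K u ∩ faceRemoved L u :=
  faceRemoved_inter_general K L hKc hKne hLc hLne hU u
end

section
/- For any fixed point x ∈ ℝ^d and unit vector u, the set function φ(K) = 1 if x ∈ K_u and 0 otherwise, where K_u = {y ∈ K : ⟨u, y⟩ < sup_{z ∈ K} ⟨u, z⟩}, is a monotone valuation on compact convex sets: φ(K ∪ L) + φ(K ∩ L) = φ(K) + φ(L) whenever K ∪ L is convex, and K ⊆ L implies φ(K) ≤ φ(L). -/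
open scoped Classical

/-!
Write `h_M = sup_{y ∈ M} ⟪u, y⟫`. For compact `K ⊆ L` we have `h_K ≤ h_L`, so `K_u ⊆ L_u`.
Now let `K ∪ L` be convex. A segment from a point of `K` to a point of `L` lies in `K ∪ L` and,
being connected, meets `K ∩ L`; taking its endpoints above `⟪u, w⟫` gives
`(K ∩ L)_u = K_u ∩ L_u`. For the union, a point `w ∈ K` with `⟪u, w⟫ = h_K` that is beaten by
some `z ∈ L` is a limit of points of the open segment `(w, z)`, which lie in `K ∪ L` strictly
above `h_K`, hence in `L`; so `w ∈ L_u` and `(K ∪ L)_u = K_u ∪ L_u`. The valuation identity is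
then inclusion–exclusion for indicator functions.
-/

open Set

section ConvexUnion

variable {E : Type*} [AddCommGroup E] [Module ℝ E] [TopologicalSpace E]
  [IsTopologicalAddGroup E] [ContinuousSMul ℝ E] {K L : Set E}

theorem Convex.exists_mem_segment_inter_of_union (hK : IsClosed K) (hL : IsClosed L)
    (hKL : Convex ℝ (K ∪ L)) {y z : E} (hy : y ∈ K) (hz : z ∈ L) :
    ∃ p ∈ segment ℝ y z, p ∈ K ∩ L := by
  obtain ⟨p, hp, hpK, hpL⟩ := isPreconnected_closed_iff.1 (convex_segment y z).isPreconnected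
    K L hK hL (hKL.segment_subset (Or.inl hy) (Or.inr hz))
    ⟨y, left_mem_segment ℝ y z, hy⟩ ⟨z, right_mem_segment ℝ y z, hz⟩
  exact ⟨p, hp, hpK, hpL⟩

theorem Convex.mem_of_isMaxOn_of_lt {f : E →ₗ[ℝ] ℝ} (hL : IsClosed L) (hKL : Convex ℝ (K ∪ L))
    {x z : E} (hx : x ∈ K) (hmax : IsMaxOn f K x) (hz : z ∈ L) (hxz : f x < f z) : x ∈ L := by
  have hopen : openSegment ℝ x z ⊆ L := by
    intro p hp
    have hfp : f x < f p := by
      have : f p ∈ openSegment ℝ (f x) (f z) := by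
        rw [← f.coe_toAffineMap, ← image_openSegment]
        exact mem_image_of_mem _ hp
      exact (openSegment_subset_Ioo hxz this).1
    rcases hKL.openSegment_subset (Or.inl hx) (Or.inr hz) hp with hpK | hpL
    · exact absurd (hmax hpK) hfp.not_ge
    · exact hpL
  exact closure_minimal hopen hL (segment_subset_closure_openSegment (left_mem_segment ℝ x z))

end ConvexUnion

section FaceRemoved

variable {d : ℕ} {u w : EuclideanSpace ℝ (Fin d)} {K L : Set (EuclideanSpace ℝ (Fin d))}

theorem inner_le_sSup_image_inner (hK : IsCompact K) (hw : w ∈ K) :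
    inner ℝ u w ≤ sSup ((fun y => (inner ℝ u y : ℝ)) '' K) :=
  le_csSup (hK.bddAbove_image (innerSL ℝ u).continuous.continuousOn) (mem_image_of_mem _ hw)

theorem exists_inner_gt_of_mem_faceRemoved (hw : w ∈ faceRemoved K u) :
    ∃ y ∈ K, inner ℝ u w < inner ℝ u y := by
  obtain ⟨_, ⟨y, hyK, rfl⟩, hwy⟩ := exists_lt_of_lt_csSup ((nonempty_of_mem hw.1).image _) hw.2
  exact ⟨y, hyK, hwy⟩

theorem faceRemoved_subset_faceRemoved (hL : IsCompact L) (hKL : K ⊆ L) :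
    faceRemoved K u ⊆ faceRemoved L u := by
  intro w hw
  obtain ⟨y, hyK, hwy⟩ := exists_inner_gt_of_mem_faceRemoved hw
  exact ⟨hKL hw.1, hwy.trans_le (inner_le_sSup_image_inner hL (hKL hyK))⟩

theorem faceRemoved_inter_s17 (hK : IsCompact K) (hL : IsCompact L) (hKL : Convex ℝ (K ∪ L)) :
    faceRemoved (K ∩ L) u = faceRemoved K u ∩ faceRemoved L u := by
  refine subset_antisymm (subset_inter (faceRemoved_subset_faceRemoved hK inter_subset_left)
    (faceRemoved_subset_faceRemoved hL inter_subset_right)) ?_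
  rintro w ⟨hwK, hwL⟩
  obtain ⟨y, hyK, hwy⟩ := exists_inner_gt_of_mem_faceRemoved hwK
  obtain ⟨z, hzL, hwz⟩ := exists_inner_gt_of_mem_faceRemoved hwL
  obtain ⟨p, hp, hpKL⟩ :=
    hKL.exists_mem_segment_inter_of_union hK.isClosed hL.isClosed hyK hzL
  have hwp : inner ℝ u w < inner ℝ u p :=
    (convex_halfSpace_gt (innerₛₗ ℝ u).isLinear _).segment_subset hwy hwz hp
  exact ⟨⟨hwK.1, hwL.1⟩,
    hwp.trans_le (inner_le_sSup_image_inner (hK.inter_right hL.isClosed) hpKL)⟩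

theorem faceRemoved_union_subset_of_mem_left (hK : IsCompact K) (hL : IsCompact L)
    (hKL : Convex ℝ (K ∪ L)) (hw : w ∈ faceRemoved (K ∪ L) u) (hwK : w ∈ K) :
    w ∈ faceRemoved K u ∪ faceRemoved L u := by
  by_cases hwK' : inner ℝ u w < sSup ((fun y => (inner ℝ u y : ℝ)) '' K)
  · exact Or.inl ⟨hwK, hwK'⟩
  have hmax : IsMaxOn (innerₛₗ ℝ u) K w := fun v hv =>
    (inner_le_sSup_image_inner hK hv).trans (not_lt.1 hwK')
  obtain ⟨z, hz, hwz⟩ := exists_inner_gt_of_mem_faceRemoved hw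
  rcases hz with hzK | hzL
  · exact absurd (hmax hzK) hwz.not_ge
  · exact Or.inr ⟨hKL.mem_of_isMaxOn_of_lt hL.isClosed hwK hmax hzL hwz,
      hwz.trans_le (inner_le_sSup_image_inner hL hzL)⟩

theorem faceRemoved_union_s17 (hK : IsCompact K) (hL : IsCompact L) (hKL : Convex ℝ (K ∪ L)) :
    faceRemoved (K ∪ L) u = faceRemoved K u ∪ faceRemoved L u := by
  refine subset_antisymm (fun w hw => ?_) (union_subset
    (faceRemoved_subset_faceRemoved (hK.union hL) subset_union_left)
    (faceRemoved_subset_faceRemoved (hK.union hL) subset_union_right))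
  rcases hw.1 with hwK | hwL
  · exact faceRemoved_union_subset_of_mem_left hK hL hKL hw hwK
  · rw [union_comm K L] at hw hKL
    exact (faceRemoved_union_subset_of_mem_left hL hK hKL hw hwL).symm

end FaceRemoved

theorem faceRemoved_indicator_monotone_valuation_general {d : ℕ}
    (x u : EuclideanSpace ℝ (Fin d)) :
    (∀ K L : Set (EuclideanSpace ℝ (Fin d)),
      IsCompact K → Convex ℝ K → IsCompact L → Convex ℝ L → Convex ℝ (K ∪ L) →
      (if x ∈ faceRemoved (K ∪ L) u then (1 : ℤ) else 0)
        + (if x ∈ faceRemoved (K ∩ L) u then (1 : ℤ) else 0)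
        = (if x ∈ faceRemoved K u then (1 : ℤ) else 0)
          + (if x ∈ faceRemoved L u then (1 : ℤ) else 0)) ∧
    (∀ K L : Set (EuclideanSpace ℝ (Fin d)),
      IsCompact K → Convex ℝ K → IsCompact L → Convex ℝ L → K ⊆ L →
      (if x ∈ faceRemoved K u then (1 : ℤ) else 0)
        ≤ (if x ∈ faceRemoved L u then (1 : ℤ) else 0)) := by
  have hind (S : Set (EuclideanSpace ℝ (Fin d))) :
      (if x ∈ S then (1 : ℤ) else 0) = S.indicator 1 x :=
    (indicator_apply S 1 x).symm
  simp only [hind]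
  refine ⟨fun K L hK _ hL _ hKL => ?_, fun K L _ _ hL _ hKL => ?_⟩
  · rw [faceRemoved_union_s17 hK hL hKL, faceRemoved_inter_s17 hK hL hKL]
    exact indicator_union_add_inter_apply _ _ _ _
  · exact indicator_le_indicator_apply_of_subset
      (faceRemoved_subset_faceRemoved hL hKL) zero_le_one

/-- The set function `K ↦ 𝟙{x ∈ K_u}` is a monotone valuation on compact convex sets. -/
theorem faceRemoved_indicator_monotone_valuation {d : ℕ}
    (x u : EuclideanSpace ℝ (Fin d)) (hu : ‖u‖ = 1) :
    (∀ K L : Set (EuclideanSpace ℝ (Fin d)),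
      IsCompact K → Convex ℝ K → IsCompact L → Convex ℝ L → Convex ℝ (K ∪ L) →
      (if x ∈ faceRemoved (K ∪ L) u then (1 : ℤ) else 0)
        + (if x ∈ faceRemoved (K ∩ L) u then (1 : ℤ) else 0)
        = (if x ∈ faceRemoved K u then (1 : ℤ) else 0)
          + (if x ∈ faceRemoved L u then (1 : ℤ) else 0)) ∧
    (∀ K L : Set (EuclideanSpace ℝ (Fin d)),
      IsCompact K → Convex ℝ K → IsCompact L → Convex ℝ L → K ⊆ L →
      (if x ∈ faceRemoved K u then (1 : ℤ) else 0)
        ≤ (if x ∈ faceRemoved L u then (1 : ℤ) else 0)) :=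
  faceRemoved_indicator_monotone_valuation_general x u
end

section
/- Let φ be an integer-valued monotone valuation on compact convex subsets of ℝ² and let P be a finite set of points such that φ({x}) ≥ 1 for each x ∈ P and for all distinct x, y ∈ P there exists z in the open segment (x,y) with φ({z}) = 0. If |P| ≥ 4, then φ(conv P) ≥ 2. -/
/-!
A point `z` of the open segment `(x, y)` cuts `[x, y]` into the two convex pieces `[x, z]` and
`[z, y]`, which meet exactly in `{z}`. Additivity gives
`φ [x, y] = φ [x, z] + φ [z, y] - φ {z}`, and monotonicity bounds each piece below by the value
`≥ 1` of its endpoint in `P`. Choosing `z` invisible (`φ {z} = 0`) yields `φ [x, y] ≥ 2`, and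
`[x, y] ⊆ conv P`.
-/

open Set AffineMap Convex

section Segment

variable {𝕜 E : Type*} [Field 𝕜] [LinearOrder 𝕜] [IsStrictOrderedRing 𝕜]
  [AddCommGroup E] [Module 𝕜 E] {x y z : E}

lemma segment_left_lineMap_eq_image_Icc (x y : E) {t : 𝕜} (ht : 0 ≤ t) :
    [x -[𝕜] lineMap x y t] = lineMap x y '' Icc 0 t := by
  rw [← segment_eq_Icc ht, image_segment, lineMap_apply_zero]

lemma segment_lineMap_right_eq_image_Icc (x y : E) {t : 𝕜} (ht : t ≤ 1) :
    [lineMap x y t -[𝕜] y] = lineMap x y '' Icc t 1 := by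
  rw [← segment_eq_Icc ht, image_segment, lineMap_apply_one]

lemma segment_union_segment_of_mem_segment (hz : z ∈ [x -[𝕜] y]) :
    [x -[𝕜] z] ∪ [z -[𝕜] y] = [x -[𝕜] y] := by
  rw [segment_eq_image_lineMap] at hz
  obtain ⟨t, ⟨ht0, ht1⟩, rfl⟩ := hz
  rw [segment_left_lineMap_eq_image_Icc x y ht0, segment_lineMap_right_eq_image_Icc x y ht1,
    ← image_union, Icc_union_Icc_eq_Icc ht0 ht1, segment_eq_image_lineMap]

lemma segment_inter_segment_of_mem_segment (hz : z ∈ [x -[𝕜] y]) :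
    [x -[𝕜] z] ∩ [z -[𝕜] y] = {z} := by
  rcases eq_or_ne x y with rfl | hxy
  · rw [segment_same, mem_singleton_iff] at hz
    rw [hz, segment_same, inter_self]
  rw [segment_eq_image_lineMap] at hz
  obtain ⟨t, ⟨ht0, ht1⟩, rfl⟩ := hz
  rw [segment_left_lineMap_eq_image_Icc x y ht0, segment_lineMap_right_eq_image_Icc x y ht1,
    ← image_inter (lineMap_injective 𝕜 hxy), Icc_inter_Icc_eq_singleton ht0 ht1,
    image_singleton]

end Segment

section Valuation

variable {E : Type*} [AddCommGroup E] [Module ℝ E] [TopologicalSpace E]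
  [IsTopologicalAddGroup E] [ContinuousSMul ℝ E] {φ : Set E → ℝ} {x y z : E}

lemma isCompact_segment (x y : E) : IsCompact [x -[ℝ] y] :=
  convexHull_pair (𝕜 := ℝ) x y ▸ (toFinite _).isCompact_convexHull ℝ

lemma valuation_segment_add_singleton
    (hadd : ∀ K L : Set E, IsCompact K → Convex ℝ K → IsCompact L → Convex ℝ L →
      Convex ℝ (K ∪ L) → φ (K ∪ L) + φ (K ∩ L) = φ K + φ L)
    (hz : z ∈ [x -[ℝ] y]) :
    φ [x -[ℝ] y] + φ {z} = φ [x -[ℝ] z] + φ [z -[ℝ] y] := by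
  have hunion := segment_union_segment_of_mem_segment hz
  have hadd_xzy := hadd _ _ (isCompact_segment x z) (convex_segment x z)
    (isCompact_segment z y) (convex_segment z y) (hunion ▸ convex_segment x y)
  rwa [hunion, segment_inter_segment_of_mem_segment hz] at hadd_xzy

lemma two_le_valuation_segment
    (hadd : ∀ K L : Set E, IsCompact K → Convex ℝ K → IsCompact L → Convex ℝ L →
      Convex ℝ (K ∪ L) → φ (K ∪ L) + φ (K ∩ L) = φ K + φ L)
    (hmono : ∀ K L : Set E, IsCompact K → Convex ℝ K → IsCompact L → Convex ℝ L →
      K ⊆ L → φ K ≤ φ L)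
    (hx : 1 ≤ φ {x}) (hy : 1 ≤ φ {y}) (hz : z ∈ [x -[ℝ] y]) (hz0 : φ {z} = 0) :
    2 ≤ φ [x -[ℝ] y] := by
  have hxz : φ {x} ≤ φ [x -[ℝ] z] :=
    hmono _ _ isCompact_singleton (convex_singleton x) (isCompact_segment x z)
      (convex_segment x z) (singleton_subset_iff.mpr (left_mem_segment ℝ x z))
  have hzy : φ {y} ≤ φ [z -[ℝ] y] :=
    hmono _ _ isCompact_singleton (convex_singleton y) (isCompact_segment z y)
      (convex_segment z y) (singleton_subset_iff.mpr (right_mem_segment ℝ z y))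
  linarith [valuation_segment_add_singleton hadd hz]

end Valuation

theorem invisibility_set_lower_bound_general
    (φ : Set (EuclideanSpace ℝ (Fin 2)) → ℝ)
    (hadd : ∀ K L : Set (EuclideanSpace ℝ (Fin 2)),
      IsCompact K → Convex ℝ K → IsCompact L → Convex ℝ L → Convex ℝ (K ∪ L) →
      φ (K ∪ L) + φ (K ∩ L) = φ K + φ L)
    (hmono : ∀ K L : Set (EuclideanSpace ℝ (Fin 2)),
      IsCompact K → Convex ℝ K → IsCompact L → Convex ℝ L → K ⊆ L → φ K ≤ φ L)
    (P : Finset (EuclideanSpace ℝ (Fin 2)))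
    (hP1 : ∀ x ∈ P, (1 : ℝ) ≤ φ {x})
    (hP2 : ∀ x ∈ P, ∀ y ∈ P, x ≠ y → ∃ z ∈ openSegment ℝ x y, φ {z} = 0)
    (hcard : 4 ≤ P.card) :
    (2 : ℝ) ≤ φ (convexHull ℝ (P : Set (EuclideanSpace ℝ (Fin 2)))) := by
  obtain ⟨x, hx, y, hy, hxy⟩ := Finset.one_lt_card.mp (by omega : 1 < P.card)
  obtain ⟨z, hz, hz0⟩ := hP2 x hx y hy hxy
  have hseg_sub : [x -[ℝ] y] ⊆ convexHull ℝ (P : Set (EuclideanSpace ℝ (Fin 2))) :=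
    segment_subset_convexHull (Finset.mem_coe.mpr hx) (Finset.mem_coe.mpr hy)
  calc (2 : ℝ) ≤ φ [x -[ℝ] y] :=
        two_le_valuation_segment hadd hmono (hP1 x hx) (hP1 y hy)
          (openSegment_subset_segment ℝ x y hz) hz0
    _ ≤ φ (convexHull ℝ (P : Set (EuclideanSpace ℝ (Fin 2)))) :=
        hmono _ _ (isCompact_segment x y) (convex_segment x y)
          (P.finite_toSet.isCompact_convexHull ℝ) (convex_convexHull ℝ _) hseg_sub

/-- If `φ` is an integer-valued monotone valuation on compact convex subsets of ℝ² and `P`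
is an invisibility set (each singleton has value ≥ 1, and between any two points of `P`
there is a point of value 0) with at least 4 points, then `φ(conv P) ≥ 2`. -/
theorem invisibility_set_lower_bound
    (φ : Set (EuclideanSpace ℝ (Fin 2)) → ℝ)
    (hint : ∀ K, ∃ m : ℤ, φ K = m)
    (hempty : φ ∅ = 0)
    (hadd : ∀ K L : Set (EuclideanSpace ℝ (Fin 2)),
      IsCompact K → Convex ℝ K → IsCompact L → Convex ℝ L → Convex ℝ (K ∪ L) →
      φ (K ∪ L) + φ (K ∩ L) = φ K + φ L)
    (hmono : ∀ K L : Set (EuclideanSpace ℝ (Fin 2)),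
      IsCompact K → Convex ℝ K → IsCompact L → Convex ℝ L → K ⊆ L → φ K ≤ φ L)
    (P : Finset (EuclideanSpace ℝ (Fin 2)))
    (hP1 : ∀ x ∈ P, (1 : ℝ) ≤ φ {x})
    (hP2 : ∀ x ∈ P, ∀ y ∈ P, x ≠ y → ∃ z ∈ openSegment ℝ x y, φ {z} = 0)
    (hcard : 4 ≤ P.card) :
    (2 : ℝ) ≤ φ (convexHull ℝ (P : Set (EuclideanSpace ℝ (Fin 2)))) :=
  invisibility_set_lower_bound_general φ hadd hmono P hP1 hP2 hcard
end
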